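/- Simultaneous name-for-name substitution commutes with the polyadic pi-calculus encoding: for any polyadic pi-calculus process P with binders fresh for the substitution, ⟦P⟧[z⃗/y⃗] = ⟦P{z⃗/y⃗}⟧, where ⟦·⟧ maps sum to case over a trivially true condition, match prefix [x=y]P to case (x=y): ⟦P⟧, input x(y⃗).P to an input with tuple pattern, and is homomorphic otherwise. -/

import Mathlib

/-- Polyadic pi-calculus processes. -/
inductive PiP : Type
  | nil
  | inp (x : ℕ) (ys : List ℕ) (P : PiP)      -- x(y⃗).P , y⃗ binds into P
  | out (x : ℕ) (ys : List ℕ) (P : PiP)      -- x̄⟨y⃗⟩.P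
  | mat (a b : ℕ) (P : PiP)                  -- [a=b]P
  | res (a : ℕ) (P : PiP)                    -- νa P
  | bang (P : PiP)
  | par (P Q : PiP)
  | sum (P Q : PiP)

/-- Conditions of the psi-calculus PPI. -/
inductive Cond : Type
  | top
  | eq (a b : ℕ)

/-- Processes of the psi-calculus PPI. -/
inductive PsiP : Type
  | nil
  | inp (x : ℕ) (bs : List ℕ) (pat : List ℕ) (P : PsiP)  -- M(λb⃗)⟨pat⟩.P
  | out (x : ℕ) (ys : List ℕ) (P : PsiP)
  | cas (brs : List (Cond × PsiP))
  | res (a : ℕ) (P : PsiP)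
  | bang (P : PsiP)
  | par (P Q : PsiP)

/-- The encoding ⟦·⟧ of polyadic pi into PPI: sums become case over ⊤,
match becomes case over an equality condition, input uses a tuple pattern,
and the encoding is homomorphic otherwise. -/
def encPi : PiP → PsiP
  | .nil => .nil
  | .inp x ys P => .inp x ys ys (encPi P)
  | .out x ys P => .out x ys (encPi P)
  | .mat a b P => .cas [(.eq a b, encPi P)]
  | .sum P Q => .cas [(.top, encPi P), (.top, encPi Q)]
  | .res a P => .res a (encPi P)
  | .bang P => .bang (encPi P)
  | .par P Q => .par (encPi P) (encPi Q)

/-- Simultaneous name substitution on pi-calculus processes (binders,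
assumed fresh for the substitution, are left unchanged). -/
def substPi (f : ℕ → ℕ) : PiP → PiP
  | .nil => .nil
  | .inp x ys P => .inp (f x) ys (substPi f P)
  | .out x ys P => .out (f x) (ys.map f) (substPi f P)
  | .mat a b P => .mat (f a) (f b) (substPi f P)
  | .res a P => .res a (substPi f P)
  | .bang P => .bang (substPi f P)
  | .par P Q => .par (substPi f P) (substPi f Q)
  | .sum P Q => .sum (substPi f P) (substPi f Q)

/-- Substitution on conditions. -/
def substC (f : ℕ → ℕ) : Cond → Cond
  | .top => .top
  | .eq a b => .eq (f a) (f b)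

mutual
/-- Simultaneous name substitution on PPI processes (pattern binders,
assumed fresh for the substitution, are left unchanged). -/
def substPsi (f : ℕ → ℕ) : PsiP → PsiP
  | .nil => .nil
  | .inp x bs pat P => .inp (f x) bs pat (substPsi f P)
  | .out x ys P => .out (f x) (ys.map f) (substPsi f P)
  | .cas brs => .cas (substBrs f brs)
  | .res a P => .res a (substPsi f P)
  | .bang P => .bang (substPsi f P)
  | .par P Q => .par (substPsi f P) (substPsi f Q)

def substBrs (f : ℕ → ℕ) : List (Cond × PsiP) → List (Cond × PsiP)
  | [] => []
  | (c, P) :: rest => (substC f c, substPsi f P) :: substBrs f rest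
end

/-- All binders of a pi process are fresh for the substitution [zs/ys]. -/
def bfresh (ys zs : List ℕ) : PiP → Prop
  | .nil => True
  | .inp _ bs P => (∀ b ∈ bs, b ∉ ys ∧ b ∉ zs) ∧ bfresh ys zs P
  | .out _ _ P => bfresh ys zs P
  | .mat _ _ P => bfresh ys zs P
  | .res a P => (a ∉ ys ∧ a ∉ zs) ∧ bfresh ys zs P
  | .bang P => bfresh ys zs P
  | .par P Q => bfresh ys zs P ∧ bfresh ys zs Q
  | .sum P Q => bfresh ys zs P ∧ bfresh ys zs Q

/-- The simultaneous substitution function [zs/ys] on names. -/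
def nsub (ys zs : List ℕ) (a : ℕ) : ℕ :=
  if a ∈ ys then zs.getD (ys.idxOf a) a else a

theorem substPsi_encPi (f : ℕ → ℕ) (P : PiP) :
    substPsi f (encPi P) = encPi (substPi f P) := by
  induction P <;> simp only [encPi, substPi, substPsi, substBrs, substC, *]

/-- simultaneous name-for-name substitution commutes with the
encoding of the polyadic pi-calculus into PPI, for processes whose binders
are fresh for the substitution. -/
theorem stmt15 (ys zs : List ℕ) (hlen : zs.length = ys.length) (P : PiP)
    (hfresh : bfresh ys zs P) :
    substPsi (nsub ys zs) (encPi P) = encPi (substPi (nsub ys zs) P) :=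
  substPsi_encPi (nsub ys zs) P
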